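/- arXiv:1808.06747 — 2 statements merged into one kernel-verified Lean document; each statement's English description precedes it below -/
import Mathlib

section
/- Let X be a Banach lattice and (f_n) a norm bounded disjoint sequence in X₊ equivalent to the unit vector basis of ℓ¹. Then 0 does not belong to the order closure of the convex hull of {f_n : n ∈ ℕ}. -/
/-!
Suppose a net in the convex hull of the `f n` order converges to `0`, dominated by a net `h γ`
decreasing to `0`, and fix `u = h γ₀`. In a convex combination `∑ w k • f k ≤ u` each
coefficient `w k` is at most `b k`, the largest `t` with `t • f k ≤ u`. Disjoint positive
elements below `u` add up to an element below `u`, so the lower `ℓ¹`-estimate bounds every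
finite sum of the `b k`: the sequence `b` is summable. Hence a finite set `F` of indices carries
mass at least `1/2` in every such combination, which therefore dominates `δ • f k` for some
`k ∈ F` and a fixed `δ > 0`. By pigeonhole one `δ • f k` lies below `h γ` for cofinally many `γ`,
hence below every `h γ`; as `inf h γ = 0` this forces `f k = 0`, contradicting the estimate.
-/

open Filter Topology Pointwise

noncomputable section

/-- A directed index type for nets. -/
structure DirectedType : Type 1 where
  ι : Type
  r : ι → ι → Prop
  nonempty : Nonempty ι
  refl : ∀ a, r a a
  trans : ∀ a b c, r a b → r b c → r a c
  directed : ∀ a b, ∃ c, r a c ∧ r b c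

/-- The natural numbers as a directed type (for sequences). -/
def natDir : DirectedType where
  ι := ℕ
  r := (· ≤ ·)
  nonempty := ⟨0⟩
  refl := fun _ => le_refl _
  trans := fun _ _ _ => le_trans
  directed := fun a b => ⟨max a b, le_max_left _ _, le_max_right _ _⟩

/-- A real valued net tends to zero. -/
def NetTendstoZero (D : DirectedType) (u : D.ι → ℝ) : Prop :=
  ∀ ε : ℝ, 0 < ε → ∃ i₀, ∀ i, D.r i₀ i → |u i| < ε

variable {X : Type*} [NormedAddCommGroup X] [Lattice X] [IsOrderedAddMonoid X] [HasSolidNorm X] [NormedSpace ℝ X]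

/-- Order convergence of a net: there is a decreasing net `h` with infimum `0`
dominating `|f i - x|` eventually. -/
def OrderConvNet (D : DirectedType) (f : D.ι → X) (x : X) : Prop :=
  ∃ (E : DirectedType) (h : E.ι → X),
    (∀ γ₁ γ₂, E.r γ₁ γ₂ → h γ₂ ≤ h γ₁) ∧ IsGLB (Set.range h) 0 ∧
      ∀ γ, ∃ i₀, ∀ i, D.r i₀ i → |f i - x| ≤ h γ

/-- The order closure of a set: all limits of order convergent nets from the set. -/
def OrderClosure (C : Set X) : Set X :=
  {x | ∃ (D : DirectedType) (f : D.ι → X), (∀ i, f i ∈ C) ∧ OrderConvNet D f x}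

/-- A set is order closed if it contains all order limits of nets from it. -/
def IsOrderClosed (C : Set X) : Prop := OrderClosure C ⊆ C

/-- Unbounded order convergence of a net. -/
def UOConvNet (D : DirectedType) (f : D.ι → X) (x : X) : Prop :=
  ∀ h : X, 0 ≤ h → OrderConvNet D (fun i => |f i - x| ⊓ h) 0

/-- Membership in the order continuous dual `X_n^~`. -/
def InOCDual (g : X →L[ℝ] ℝ) : Prop :=
  ∀ (D : DirectedType) (f : D.ι → X), OrderConvNet D f 0 →
    NetTendstoZero D fun i => g (f i)

/-- Membership in the unbounded order continuous dual `X_uo^~`. -/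
def InUODual (g : X →L[ℝ] ℝ) : Prop :=
  ∀ (D : DirectedType) (f : D.ι → X), (∃ M, ∀ i, ‖f i‖ ≤ M) → UOConvNet D f 0 →
    NetTendstoZero D fun i => g (f i)

/-- Convergence of a net in the topology `σ(X, X_n^~)`. -/
def SigmaNConvNet (D : DirectedType) (f : D.ι → X) (x : X) : Prop :=
  ∀ g : X →L[ℝ] ℝ, InOCDual g → NetTendstoZero D fun i => g (f i) - g x

/-- Convergence of a net in the topology `σ(X, X_uo^~)`. -/
def SigmaUOConvNet (D : DirectedType) (f : D.ι → X) (x : X) : Prop :=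
  ∀ g : X →L[ℝ] ℝ, InUODual g → NetTendstoZero D fun i => g (f i) - g x

/-- A set is `σ(X, X_n^~)`-closed. -/
def IsSigmaNClosed (C : Set X) : Prop :=
  ∀ (D : DirectedType) (f : D.ι → X), (∀ i, f i ∈ C) →
    ∀ x, SigmaNConvNet D f x → x ∈ C

/-- A set is `σ(X, X_uo^~)`-closed. -/
def IsSigmaUOClosed (C : Set X) : Prop :=
  ∀ (D : DirectedType) (f : D.ι → X), (∀ i, f i ∈ C) →
    ∀ x, SigmaUOConvNet D f x → x ∈ C

/-- The `σ(X, X_n^~)`-closure of a set. -/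
def SigmaNClosure (C : Set X) : Set X :=
  {x | ∃ (D : DirectedType) (f : D.ι → X), (∀ i, f i ∈ C) ∧ SigmaNConvNet D f x}

/-- The `|σ|(X, X_n^~)`-sequential closure of a set. -/
def AbsSigmaSeqClosure (C : Set X) : Set X :=
  {x | ∃ s : ℕ → X, (∀ n, s n ∈ C) ∧
    ∀ g : X →L[ℝ] ℝ, InOCDual g → Tendsto (fun n => g (|s n - x|)) atTop (𝓝 0)}

/-- A set is `|σ|(X, X_n^~)`-sequentially closed. -/
def IsAbsSigmaSeqClosed (C : Set X) : Prop := AbsSigmaSeqClosure C ⊆ C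

/-- The order on the dual: `g ≤ h` iff `g x ≤ h x` on the positive cone. -/
def dualLE (g h : X →L[ℝ] ℝ) : Prop := ∀ x : X, 0 ≤ x → g x ≤ h x

/-- Order continuity of the norm on a subset `S` of the dual: every net in `S`
decreasing to `0` (infimum `0` among lower bounds from `S`) converges to `0` in
the operator norm. -/
def DualOCOn (S : Set (X →L[ℝ] ℝ)) : Prop :=
  ∀ (D : DirectedType) (f : D.ι → (X →L[ℝ] ℝ)), (∀ i, f i ∈ S) →
    (∀ i j, D.r i j → dualLE (f j) (f i)) → (∀ i, dualLE 0 (f i)) →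
    (∀ h ∈ S, (∀ i, dualLE h (f i)) → dualLE h 0) →
    NetTendstoZero D fun i => ‖f i‖

/-- A sequence is weakly null. -/
def WeaklyNull (f : ℕ → X) : Prop :=
  ∀ g : X →L[ℝ] ℝ, Tendsto (fun n => g (f n)) atTop (𝓝 0)

/-- The sequence satisfies a lower `ℓ¹`-estimate, i.e. it is equivalent to the
unit vector basis of `ℓ¹`. -/
def IsL1Basic (f : ℕ → X) : Prop :=
  ∃ M : ℝ, 0 < M ∧ ∀ (m : ℕ) (a : ℕ → ℝ),
    (1 / M) * ∑ k ∈ Finset.range m, |a k| ≤ ‖∑ k ∈ Finset.range m, a k • f k‖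

variable (X)

/-- Order continuity of the norm of `X`. -/
def OCNorm : Prop :=
  ∀ (D : DirectedType) (f : D.ι → X), (∀ i j, D.r i j → f j ≤ f i) →
    IsGLB (Set.range f) 0 → NetTendstoZero D fun i => ‖f i‖

/-- The order continuous dual as a set of continuous linear functionals. -/
def OCDual : Set (X →L[ℝ] ℝ) := {g | InOCDual g}

/-- The norm dual `X*` is order continuous. -/
def DualOrderContinuous : Prop := DualOCOn (Set.univ : Set (X →L[ℝ] ℝ))

/-- The order continuous dual `X_n^~` is order continuous. -/
def OCDualOrderContinuous : Prop := DualOCOn (OCDual X)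

/-- `X` is monotonically complete. -/
def MonotonicallyComplete : Prop :=
  ∀ (D : DirectedType) (f : D.ι → X), (∀ i j, D.r i j → f i ≤ f j) →
    (∃ M, ∀ i, ‖f i‖ ≤ M) → ∃ s, IsLUB (Set.range f) s

/-- `X` is Dedekind complete. -/
def DedekindComplete : Prop :=
  ∀ S : Set X, S.Nonempty → BddAbove S → ∃ s, IsLUB S s

/-- `X` is σ-Dedekind complete. -/
def SigmaDedekindComplete : Prop :=
  ∀ f : ℕ → X, BddAbove (Set.range f) → ∃ s, IsLUB (Set.range f) s

/-- `X` has the weak Fatou property. -/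
def WeakFatou : Prop :=
  ∃ r : ℝ, 0 < r ∧ ∀ (D : DirectedType) (f : D.ι → X),
    (∀ i j, D.r i j → f i ≤ f j) → ∀ s, IsLUB (Set.range f) s →
    ∀ M : ℝ, (∀ i, ‖f i‖ ≤ M) → ‖s‖ ≤ r * M

/-- `X_n^~` separates the points of `X`. -/
def OCDualSeparatesPoints : Prop :=
  ∀ x : X, x ≠ 0 → ∃ g : X →L[ℝ] ℝ, InOCDual g ∧ g x ≠ 0

/-- `X_n^~` contains a strictly positive element. -/
def HasStrictlyPositiveOCFunctional : Prop :=
  ∃ g : X →L[ℝ] ℝ, InOCDual g ∧ ∀ x : X, x ≠ 0 → 0 < g (|x|)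

/-- The unit ball `B` determined by `X_n^~`. -/
def KSBall : Set X :=
  {x | ∀ g : X →L[ℝ] ℝ, InOCDual g → dualLE 0 g → ‖g‖ ≤ 1 → g (|x|) ≤ 1}

/-- `σ(X, X_n^~)` has the Krein–Smulian property. -/
def KreinSmulianProperty : Prop :=
  ∀ C : Set X, Convex ℝ C →
    (∀ k : ℕ, IsSigmaNClosed (C ∩ (k : ℝ) • KSBall X)) → IsSigmaNClosed C

/-- Property `P1`: every order closed convex set is `σ(X, X_n^~)`-closed. -/
def PropP1 : Prop := ∀ C : Set X, Convex ℝ C → IsOrderClosed C → IsSigmaNClosed C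

/-- Property `P4`: every norm bounded order closed convex set is
`|σ|(X, X_n^~)`-sequentially closed. -/
def PropP4 : Prop :=
  ∀ C : Set X, Convex ℝ C → (∃ M, ∀ x ∈ C, ‖x‖ ≤ M) → IsOrderClosed C →
    IsAbsSigmaSeqClosed C

/-- The disjoint order continuity property. -/
def DOCP : Prop :=
  ∀ f : ℕ → X, (∀ n, 0 ≤ f n) → (∃ M, ∀ n, ‖f n‖ ≤ M) →
    (∀ n m, n ≠ m → f n ⊓ f m = 0) →
    (∀ g : X →L[ℝ] ℝ, InOCDual g → Tendsto (fun n => g (f n)) atTop (𝓝 0)) →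
    WeaklyNull f

/-- The order continuous part `X_a` of `X`. -/
def OrderContPart : Set X :=
  {f | ∀ (D : DirectedType) (g : D.ι → X), (∀ i, |g i| ≤ |f|) →
    OrderConvNet D g 0 → NetTendstoZero D fun i => ‖g i‖}

/-- The order subsequence splitting property. -/
def OSSP : Prop :=
  ∀ f : ℕ → X, (∀ n, 0 ≤ f n) → (∃ M, ∀ n, ‖f n‖ ≤ M) → UOConvNet natDir f 0 →
    ∃ φ : ℕ → ℕ, StrictMono φ ∧ ∃ x y z : ℕ → X,
      (∀ k, f (φ k) = x k + y k + z k) ∧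
      (∀ k, 0 ≤ x k) ∧ (∀ k, 0 ≤ y k) ∧ (∀ k, 0 ≤ z k) ∧
      (∀ k, x k ∈ OrderContPart X) ∧
      (∀ k l, k ≠ l → y k ⊓ y l = 0) ∧
      (∃ b, ∀ k, z k ≤ b)

variable {X}

section LatticeOrderedGroup

variable {α : Type*} [AddCommGroup α] [Lattice α] [IsOrderedAddMonoid α]

theorem add_inf_eq_zero {a b v : α} (ha : 0 ≤ a) (hb : 0 ≤ b) (hv : 0 ≤ v)
    (hav : a ⊓ v = 0) (hbv : b ⊓ v = 0) : (a + b) ⊓ v = 0 := by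
  refine le_antisymm ?_ (le_inf (add_nonneg ha hb) hv)
  have hle_a : (a + b) ⊓ v ≤ a :=
    calc (a + b) ⊓ v ≤ (a + b) ⊓ (a + v) := inf_le_inf_left _ (le_add_of_nonneg_left ha)
      _ = a + b ⊓ v := (add_inf b v a).symm
      _ = a := by rw [hbv, add_zero]
  exact hav ▸ le_inf hle_a inf_le_right

theorem Finset.sum_inf_eq_zero {ι : Type*} {s : Finset ι} {u : ι → α} {v : α}
    (hu : ∀ i ∈ s, 0 ≤ u i) (hv : 0 ≤ v) (h : ∀ i ∈ s, u i ⊓ v = 0) :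
    (∑ i ∈ s, u i) ⊓ v = 0 := by
  classical
  induction s using Finset.induction_on with
  | empty => simpa using hv
  | insert i s hi ih =>
    rw [Finset.forall_mem_insert] at hu h
    rw [Finset.sum_insert hi]
    exact add_inf_eq_zero hu.1 (Finset.sum_nonneg hu.2) hv h.1 (ih hu.2 h.2)

theorem Finset.sum_le_of_pairwise_inf_eq_zero {ι : Type*} {s : Finset ι} {u : ι → α} {H : α}
    (hu : ∀ i ∈ s, 0 ≤ u i) (hd : (s : Set ι).Pairwise fun i j ↦ u i ⊓ u j = 0)
    (hH₀ : 0 ≤ H) (hH : ∀ i ∈ s, u i ≤ H) : ∑ i ∈ s, u i ≤ H := by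
  classical
  induction s using Finset.induction_on with
  | empty => simpa using hH₀
  | insert i s hi ih =>
    rw [Finset.coe_insert, Set.pairwise_insert] at hd
    rw [Finset.forall_mem_insert] at hu hH
    have hdisj : (∑ j ∈ s, u j) ⊓ u i = 0 :=
      Finset.sum_inf_eq_zero hu.2 hu.1 fun j hj ↦ (hd.2 j hj (ne_of_mem_of_not_mem hj hi).symm).2
    rw [Finset.sum_insert hi, ← inf_add_sup (u i), inf_comm, hdisj, zero_add]
    exact sup_le hH.1 (ih hu.2 hd.1 hH.2)

variable {𝕜 : Type*} [Field 𝕜] [LinearOrder 𝕜] [IsStrictOrderedRing 𝕜] [Module 𝕜 α]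
  [PosSMulMono 𝕜 α]

theorem smul_inf_smul_eq_zero {a b : 𝕜} {x y : α} (ha : 0 ≤ a) (hb : 0 ≤ b) (hx : 0 ≤ x)
    (hy : 0 ≤ y) (h : x ⊓ y = 0) : a • x ⊓ b • y = 0 := by
  have hc : 0 < a + b + 1 := by linarith
  refine le_antisymm ?_ (le_inf (smul_nonneg ha hx) (smul_nonneg hb hy))
  calc a • x ⊓ b • y ≤ (a + b + 1) • x ⊓ (a + b + 1) • y :=
        inf_le_inf (smul_le_smul_of_nonneg_right (by linarith) hx)
          (smul_le_smul_of_nonneg_right (by linarith) hy)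
    _ = (a + b + 1) • (x ⊓ y) := ((OrderIso.smulRight hc).map_inf x y).symm
    _ = 0 := by rw [h, smul_zero]

end LatticeOrderedGroup

instance (E : DirectedType) : Preorder E.ι where
  le := E.r
  le_refl := E.refl
  le_trans := E.trans

instance (E : DirectedType) : IsDirectedOrder E.ι := ⟨E.directed⟩

instance (E : DirectedType) : Nonempty E.ι := E.nonempty

theorem Antitone.exists_forall_le_of_eventually_exists_le {ι κ β : Type*} [Preorder ι]
    [IsDirectedOrder ι] [Nonempty ι] [Preorder β] {h : ι → β} (hh : Antitone h)
    {F : Finset κ} {g : κ → β} (hev : ∀ᶠ i in atTop, ∃ k ∈ F, g k ≤ h i) :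
    ∃ k ∈ F, ∀ i, g k ≤ h i := by
  by_contra! H
  have hnot : ∀ k ∈ F, ∀ᶠ i in atTop, ¬g k ≤ h i := fun k hk ↦
    let ⟨i, hi⟩ := H k hk
    (eventually_ge_atTop i).mono fun j hij hle ↦ hi (hle.trans (hh hij))
  obtain ⟨i, ⟨k, hk, hle⟩, hi⟩ := (hev.and ((eventually_all_finset F).2 hnot)).exists
  exact hi k hk hle

/- No ordered-module axiom is assumed on `X`: positivity of dyadic multiples comes from
`0 ≤ 2 • y → 0 ≤ y`, and closedness of the positive cone (solid norm) does the rest. -/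
instance : PosSMulMono ℝ X := PosSMulMono.of_smul_nonneg fun c hc x hx ↦ by
  have hdyadic : ∀ n : ℕ, 0 ≤ ((2 : ℝ) ^ n)⁻¹ • x := by
    intro n
    induction n with
    | zero => simpa using hx
    | succ n ih =>
      refine nsmul_two_semiclosed ?_
      rwa [← Nat.cast_smul_eq_nsmul ℝ, smul_smul, pow_succ, Nat.cast_ofNat, mul_inv,
        mul_left_comm, mul_inv_cancel₀ two_ne_zero, mul_one]
  have happrox : Tendsto (fun n : ℕ ↦ (⌊c * 2 ^ n⌋₊ : ℝ) / 2 ^ n) atTop (𝓝 c) :=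
    (tendsto_nat_floor_mul_div_atTop hc).comp (tendsto_pow_atTop_atTop_of_one_lt one_lt_two)
  refine ge_of_tendsto' (happrox.smul_const x) fun n ↦ ?_
  rw [div_eq_mul_inv, mul_smul, Nat.cast_smul_eq_nsmul]
  exact nsmul_nonneg (hdyadic n) _

theorem IsL1Basic.exists_sum_abs_le {E : Type*} [NormedAddCommGroup E] [NormedSpace ℝ E]
    {f : ℕ → E} (hf : IsL1Basic f) :
    ∃ M > 0, ∀ (s : Finset ℕ) (a : ℕ → ℝ), ∑ k ∈ s, |a k| ≤ M * ‖∑ k ∈ s, a k • f k‖ := by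
  obtain ⟨M, hM, hest⟩ := hf
  refine ⟨M, hM, fun s a ↦ ?_⟩
  obtain ⟨m, hm⟩ := s.exists_nat_subset_range
  have := hest m fun k ↦ if k ∈ s then a k else 0
  simp only [apply_ite, abs_zero, ite_smul, zero_smul, Finset.sum_ite_mem,
    Finset.inter_eq_right.2 hm] at this
  rwa [one_div, inv_mul_le_iff₀ hM] at this

theorem IsL1Basic.ne_zero {E : Type*} [NormedAddCommGroup E] [NormedSpace ℝ E] {f : ℕ → E}
    (hf : IsL1Basic f) (k : ℕ) : f k ≠ 0 := by
  obtain ⟨M, -, hest⟩ := hf.exists_sum_abs_le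
  intro hk
  have h := hest {k} 1
  norm_num [hk] at h

section DisjointL1Sequence

variable {f : ℕ → X} (hpos : ∀ n, 0 ≤ f n) (hdisj : ∀ n m, n ≠ m → f n ⊓ f m = 0)
  (hl1 : IsL1Basic f)
include hpos hdisj hl1

theorem exists_sum_le_of_smul_le {u : X} (hu : 0 ≤ u) :
    ∃ C, ∀ (s : Finset ℕ) (a : ℕ → ℝ), (∀ k ∈ s, 0 ≤ a k) → (∀ k ∈ s, a k • f k ≤ u) →
      ∑ k ∈ s, a k ≤ C := by
  obtain ⟨M, hM, hest⟩ := hl1.exists_sum_abs_le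
  refine ⟨M * ‖u‖, fun s a ha hau ↦ ?_⟩
  have hterm : ∀ k ∈ s, 0 ≤ a k • f k := fun k hk ↦ smul_nonneg (ha k hk) (hpos k)
  have hle : ∑ k ∈ s, a k • f k ≤ u :=
    Finset.sum_le_of_pairwise_inf_eq_zero hterm
      (fun k hk l hl hkl ↦ smul_inf_smul_eq_zero (ha k hk) (ha l hl) (hpos k) (hpos l)
        (hdisj k l hkl)) hu hau
  have habs : |∑ k ∈ s, a k • f k| ≤ |u| := by
    rwa [abs_of_nonneg (Finset.sum_nonneg hterm), abs_of_nonneg hu]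
  calc ∑ k ∈ s, a k = ∑ k ∈ s, |a k| :=
        Finset.sum_congr rfl fun k hk ↦ (abs_of_nonneg (ha k hk)).symm
    _ ≤ M * ‖∑ k ∈ s, a k • f k‖ := hest s a
    _ ≤ M * ‖u‖ := mul_le_mul_of_nonneg_left (norm_le_norm_of_abs_le_abs habs) hM.le

theorem exists_summable_forall_le_of_smul_le {u : X} (hu : 0 ≤ u) :
    ∃ b : ℕ → ℝ, Summable b ∧ ∀ k t, t • f k ≤ u → t ≤ b k := by
  obtain ⟨C, hC⟩ := exists_sum_le_of_smul_le hpos hdisj hl1 hu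
  set S : ℕ → Set ℝ := fun k ↦ {t | t • f k ≤ u}
  have hS_bdd : ∀ k, BddAbove (S k) := fun k ↦ ⟨max 0 C, fun t (ht : t • f k ≤ u) ↦ by
    rcases le_total t 0 with h | h
    · exact h.trans (le_max_left _ _)
    · simpa using (hC {k} (fun _ ↦ t) (by simpa using h) (by simpa using ht)).trans
        (le_max_right _ _)⟩
  have hS_zero : ∀ k, (0 : ℝ) ∈ S k := fun k ↦ by simpa [S] using hu
  have hS_mem : ∀ k, sSup (S k) ∈ S k := fun k ↦
    (isClosed_le (continuous_id.smul continuous_const) continuous_const).csSup_mem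
      ⟨0, hS_zero k⟩ (hS_bdd k)
  have hb_nonneg : ∀ k, 0 ≤ sSup (S k) := fun k ↦ le_csSup (hS_bdd k) (hS_zero k)
  exact ⟨fun k ↦ sSup (S k), summable_of_sum_le hb_nonneg fun s ↦
    hC s _ (fun k _ ↦ hb_nonneg k) (fun k _ ↦ hS_mem k), fun k t ht ↦ le_csSup (hS_bdd k) ht⟩

theorem exists_finset_smul_le_of_mem_convexHull {u : X} (hu : 0 ≤ u) :
    ∃ (F : Finset ℕ) (δ : ℝ), 0 < δ ∧
      ∀ c ∈ convexHull ℝ (Set.range f), c ≤ u → ∃ k ∈ F, δ • f k ≤ c := by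
  obtain ⟨b, hb, hle⟩ := exists_summable_forall_le_of_smul_le hpos hdisj hl1 hu
  obtain ⟨F, hF⟩ := summable_iff_vanishing.1 hb _ (Iio_mem_nhds (by norm_num : (0 : ℝ) < 1 / 2))
  set δ : ℝ := 1 / (2 * (F.card + 1))
  have hδF : F.card * δ ≤ 1 / 2 := by
    simp only [δ]
    rw [mul_one_div, div_le_div_iff₀ (by positivity) two_pos]
    linarith
  have hδ : 0 < δ := by positivity
  refine ⟨F, δ, hδ, fun c hc hcu ↦ ?_⟩
  obtain ⟨s, w, hw, hw1, rfl⟩ := (convexHull_range_eq_exists_affineCombination f).subset hc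
  rw [Finset.affineCombination_eq_linear_combination s f w hw1] at hcu ⊢
  have hterm : ∀ k ∈ s, w k • f k ≤ ∑ j ∈ s, w j • f j := fun k hk ↦
    Finset.single_le_sum (fun j hj ↦ smul_nonneg (hw j hj) (hpos j)) hk
  have hout : ∑ k ∈ s \ F, w k < 1 / 2 :=
    (Finset.sum_le_sum fun k hk ↦ hle k _ ((hterm k (Finset.mem_sdiff.1 hk).1).trans hcu)).trans_lt
      (hF _ Finset.sdiff_disjoint)
  have hin : ∑ _k ∈ s ∩ F, δ < ∑ k ∈ s ∩ F, w k := by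
    have hcard : ((s ∩ F).card : ℝ) ≤ F.card := by
      exact_mod_cast Finset.card_le_card Finset.inter_subset_right
    calc ∑ _k ∈ s ∩ F, δ = (s ∩ F).card * δ := by rw [Finset.sum_const, nsmul_eq_mul]
      _ ≤ F.card * δ := mul_le_mul_of_nonneg_right hcard hδ.le
      _ ≤ 1 / 2 := hδF
      _ < ∑ k ∈ s ∩ F, w k := by linarith [Finset.sum_inter_add_sum_sdiff s F w]
  obtain ⟨k, hk, hδk⟩ := Finset.exists_lt_of_sum_lt hin
  rw [Finset.mem_inter] at hk
  exact ⟨k, hk.2, (smul_le_smul_of_nonneg_right hδk.le (hpos k)).trans (hterm k hk.1)⟩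

end DisjointL1Sequence

theorem exists_antitone_le_of_zero_mem_orderClosure {G : Type*} [NormedAddCommGroup G] [Lattice G]
    {C : Set G} (h0 : (0 : G) ∈ OrderClosure C) :
    ∃ (E : DirectedType) (h : E.ι → G), Antitone h ∧ IsGLB (Set.range h) 0 ∧
      ∀ γ, ∃ c ∈ C, c ≤ h γ := by
  obtain ⟨D, x, hxC, E, h, hanti, hglb, hdom⟩ := h0
  refine ⟨E, h, fun _ _ ↦ hanti _ _, hglb, fun γ ↦ ?_⟩
  obtain ⟨i, hi⟩ := hdom γ
  exact ⟨x i, hxC i, (le_abs_self _).trans (by simpa using hi i (D.refl i))⟩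

theorem stmt2_general {X : Type*} [NormedAddCommGroup X] [Lattice X] [IsOrderedAddMonoid X] [HasSolidNorm X] [NormedSpace ℝ X]
    (f : ℕ → X) (hpos : ∀ n, 0 ≤ f n)
    (hdisj : ∀ n m, n ≠ m → f n ⊓ f m = 0) (hl1 : IsL1Basic f) :
    (0 : X) ∉ OrderClosure (convexHull ℝ (Set.range f)) := by
  intro h0
  obtain ⟨E, h, hanti, hglb, hle⟩ := exists_antitone_le_of_zero_mem_orderClosure h0
  obtain ⟨γ₀⟩ := E.nonempty
  obtain ⟨F, δ, hδ, hF⟩ :=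
    exists_finset_smul_le_of_mem_convexHull hpos hdisj hl1 (hglb.1 ⟨γ₀, rfl⟩)
  have hev : ∀ᶠ γ in atTop, ∃ k ∈ F, δ • f k ≤ h γ := by
    filter_upwards [eventually_ge_atTop γ₀] with γ hγ
    obtain ⟨c, hc, hch⟩ := hle γ
    obtain ⟨k, hk, hkc⟩ := hF c hc (hch.trans (hanti hγ))
    exact ⟨k, hk, hkc.trans hch⟩
  obtain ⟨k, -, hk⟩ := hanti.exists_forall_le_of_eventually_exists_le hev
  have hzero : δ • f k = 0 :=
    le_antisymm (hglb.2 (Set.forall_mem_range.2 hk)) (smul_nonneg hδ.le (hpos k))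
  exact hl1.ne_zero k ((smul_eq_zero.1 hzero).resolve_left hδ.ne')

/-- for a norm bounded disjoint positive `ℓ¹`-sequence, `0` is not
in the order closure of the convex hull of `{fₙ}`. -/
theorem stmt2 {X : Type*} [NormedAddCommGroup X] [Lattice X] [IsOrderedAddMonoid X] [HasSolidNorm X] [NormedSpace ℝ X] [CompleteSpace X]
    (f : ℕ → X) (hpos : ∀ n, 0 ≤ f n) (hbdd : ∃ M : ℝ, ∀ n, ‖f n‖ ≤ M)
    (hdisj : ∀ n m, n ≠ m → f n ⊓ f m = 0) (hl1 : IsL1Basic f) :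
    (0 : X) ∉ OrderClosure (convexHull ℝ (Set.range f)) :=
  stmt2_general f hpos hdisj hl1
end
end

section
/- Let X be an order continuous Banach lattice. Then every order closed convex subset of X is σ(X, X_n^~)-closed. -/
open Filter Topology Pointwise

noncomputable section

variable {X : Type*} [NormedAddCommGroup X] [Lattice X] [HasSolidNorm X] [IsOrderedAddMonoid X] [NormedSpace ℝ X]

variable (X)

/-!
Order continuity of the norm makes every bounded functional order continuous, so
`σ(X, X_n^~)` is the weak topology and, by Hahn–Banach separation, it suffices that an order
closed convex set be norm closed. Any `x` in the norm closure of `C` is the limit of some `s n ∈ C`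
with `‖s n - x‖` summable; then the tails `∑_{k ≥ m} |s k - x|` decrease to `0` and dominate
`|s m - x|`, so `s` order converges to `x`.
-/

theorem NetTendstoZero.of_abs_le_mul {D : DirectedType} {u v : D.ι → ℝ} {c : ℝ} (hc : 0 ≤ c)
    (hu : NetTendstoZero D u) (hvu : ∀ i, |v i| ≤ c * |u i|) : NetTendstoZero D v := by
  intro ε hε
  obtain ⟨i₀, hi₀⟩ := hu (ε / (c + 1)) (by positivity)
  refine ⟨i₀, fun i hi => ?_⟩
  calc |v i| ≤ c * |u i| := hvu i
    _ ≤ c * (ε / (c + 1)) := by gcongr; exact (hi₀ i hi).le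
    _ < ε := by rw [mul_div_assoc', div_lt_iff₀ (by positivity)]; linarith

section

variable {E : Type*} [NormedAddCommGroup E] [Lattice E] [HasSolidNorm E] [IsOrderedAddMonoid E]

theorem OrderConvNet.netTendstoZero_norm (hoc : OCNorm E) {D : DirectedType} {f : D.ι → E}
    (hf : OrderConvNet D f 0) : NetTendstoZero D fun i => ‖f i‖ := by
  obtain ⟨F, h, h_anti, h_glb, h_dom⟩ := hf
  intro ε hε
  obtain ⟨γ, hγ⟩ := hoc F h h_anti h_glb ε hε
  obtain ⟨i₀, hi₀⟩ := h_dom γ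
  refine ⟨i₀, fun i hi => ?_⟩
  have h_abs : |f i| ≤ |h γ| := by
    rw [abs_of_nonneg (h_glb.1 ⟨γ, rfl⟩), ← sub_zero (f i)]
    exact hi₀ i hi
  rw [abs_norm]
  exact (norm_le_norm_of_abs_le_abs h_abs).trans_lt (lt_of_abs_lt (hγ γ (F.refl γ)))

theorem inOCDual_of_ocNorm [NormedSpace ℝ E] (hoc : OCNorm E) (g : E →L[ℝ] ℝ) : InOCDual g :=
  fun _ _ hf => (hf.netTendstoZero_norm hoc).of_abs_le_mul (norm_nonneg g) fun i => by
    rw [abs_norm, ← Real.norm_eq_abs]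
    exact g.le_opNorm _

theorem OrderConvNet.of_summable_norm_sub [CompleteSpace E] {s : ℕ → E} {x : E}
    (hs : Summable fun n => ‖s n - x‖) : OrderConvNet natDir s x := by
  set u : ℕ → E := fun n => |s n - x|
  have hu : Summable u := Summable.of_norm (by simpa only [u, norm_abs_eq_norm] using hs)
  set t : ℕ → E := fun m => ∑' k, u (k + m)
  have h_tail (m : ℕ) : Summable fun k => u (k + m) := (summable_nat_add_iff m).2 hu
  have h_dom (m i : ℕ) (hmi : m ≤ i) : u i ≤ t m := by
    obtain ⟨k, rfl⟩ := Nat.exists_eq_add_of_le' hmi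
    exact (h_tail m).le_tsum k fun _ _ => abs_nonneg _
  have h_anti : Antitone t := antitone_nat_of_succ_le fun m => by
    change ∑' k, u (k + (m + 1)) ≤ ∑' k, u (k + m)
    rw [(h_tail m).tsum_eq_zero_add]
    simp only [zero_add, add_right_comm _ 1 m, ← add_assoc]
    exact le_add_of_nonneg_left (abs_nonneg _)
  have h_glb : IsGLB (Set.range t) 0 := by
    refine ⟨?_, fun b hb => ge_of_tendsto' (tendsto_sum_nat_add u) fun m => hb ⟨m, rfl⟩⟩
    rintro _ ⟨m, rfl⟩
    exact tsum_nonneg fun _ => abs_nonneg _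
  exact ⟨natDir, t, fun _ _ h => h_anti h, h_glb, fun m => ⟨m, h_dom m⟩⟩

theorem IsOrderClosed.isClosed [CompleteSpace E] {C : Set E} (hC : IsOrderClosed C) :
    IsClosed C := by
  refine isClosed_of_closure_subset fun x hx => hC ?_
  have h_approx (n : ℕ) : ∃ y ∈ C, dist x y < (1 / 2 : ℝ) ^ n :=
    Metric.mem_closure_iff.1 hx _ (by positivity)
  choose s hsC hs using h_approx
  refine ⟨natDir, s, hsC, OrderConvNet.of_summable_norm_sub ?_⟩
  refine summable_geometric_two.of_nonneg_of_le (fun _ => norm_nonneg _) fun n => ?_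
  rw [← dist_eq_norm, dist_comm]
  exact (hs n).le

end

variable {X}
/-- in an order continuous Banach lattice, every order closed convex
set is `σ(X, X_n^~)`-closed. -/
theorem stmt4 {X : Type*} [NormedAddCommGroup X] [Lattice X] [HasSolidNorm X] [IsOrderedAddMonoid X] [NormedSpace ℝ X] [CompleteSpace X]
    (hoc : OCNorm X) :
    ∀ C : Set X, Convex ℝ C → IsOrderClosed C → IsSigmaNClosed C := by
  intro C hconv hord D f hf x hx
  by_contra hxC
  obtain ⟨g, u, hgC, hgx⟩ := geometric_hahn_banach_closed_point hconv hord.isClosed hxC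
  obtain ⟨i, hi⟩ := hx g (inOCDual_of_ocNorm hoc g) (g x - u) (sub_pos.2 hgx)
  have h_close := (abs_sub_lt_iff.1 (hi i (D.refl i))).2
  linarith [hgC (f i) (hf i)]
end
end
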